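/- Let H be a complex Hilbert space and A a bounded invertible operator on H with ‖A‖ < R and ‖A⁻¹‖ < R, where R > 1 and r = 1/R. Let A = UG be the polar decomposition with U unitary and G positive definite self-adjoint. Then for every θ ∈ ℝ, Re M(θ,A*) ≥ N(θ), where M(θ,A*) = (2π/(R² − r²))·(R² + r² − (e^{iθ}A*)⁻¹ − e^{iθ}A*) and N(θ) = (2π/(R² − r²))·((R² + r² − R − r) + ((R + r + 2)/4)(2 − e^{iθ}U* − e^{−iθ}U)), and N(θ) is a positive definite invertible operator. -/

import Mathlib

/-!
Write `A* = G U*`, `K = G + G⁻¹`, `q = (R + r + 2)/2` and `W = e^{iθ} (q - K) U*`. Expanding the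
definitions, `Re M(θ,A*) - N(θ) = (π / (R² - r²)) (W + W* + (R + r - 2))`. Since `r ≤ G ≤ R` and
`r = 1/R`, the spectrum of `K` lies in `[2, R + r]`, so `‖W‖ = ‖q - K‖ ≤ (R + r - 2)/2`, and for any
`W` one has `W + W* ≥ -2‖W‖`. For `N(θ)`, note `2 - e^{iθ}U* - e^{-iθ}U = |1 - e^{-iθ}U|² ≥ 0`, so
`N(θ) ≥ (2π / (R² - r²)) (R² + r² - R - r) > 0`, which also makes `N(θ)` invertible.
-/

open Complex ContinuousLinearMap

/-- `M(θ, A*)` from the decomposition lemma. -/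
noncomputable def Mop {H : Type*} [NormedAddCommGroup H] [InnerProductSpace ℂ H]
    [CompleteSpace H] (R r θ : ℝ) (A : H →L[ℂ] H) : H →L[ℂ] H :=
  (((2 * Real.pi) / (R ^ 2 - r ^ 2) : ℝ) : ℂ) •
    (((R ^ 2 + r ^ 2 : ℝ) : ℂ) • (1 : H →L[ℂ] H) -
      Ring.inverse (Complex.exp ((θ : ℂ) * Complex.I) • ContinuousLinearMap.adjoint A) -
      Complex.exp ((θ : ℂ) * Complex.I) • ContinuousLinearMap.adjoint A)

/-- `N(θ)` from Lemma 4.1, built from the unitary part `U` of `A`. -/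
noncomputable def Nop {H : Type*} [NormedAddCommGroup H] [InnerProductSpace ℂ H]
    [CompleteSpace H] (R r θ : ℝ) (U : H →L[ℂ] H) : H →L[ℂ] H :=
  (((2 * Real.pi) / (R ^ 2 - r ^ 2) : ℝ) : ℂ) •
    (((R ^ 2 + r ^ 2 - R - r : ℝ) : ℂ) • (1 : H →L[ℂ] H) +
      (((R + r + 2) / 4 : ℝ) : ℂ) •
        ((2 : ℂ) • (1 : H →L[ℂ] H) -
          Complex.exp ((θ : ℂ) * Complex.I) • ContinuousLinearMap.adjoint U -
          Complex.exp (-(θ : ℂ) * Complex.I) • U))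

lemma add_inv_mem_Icc {R x : ℝ} (hR : 0 < R) (hx : x ∈ Set.Icc R⁻¹ R) :
    x + x⁻¹ ∈ Set.Icc 2 (R + R⁻¹) := by
  obtain ⟨hRx, hxR⟩ := hx
  have hx0 : 0 < x := (inv_pos.mpr hR).trans_le hRx
  have hxR1 : 1 ≤ x * R := by rw [inv_le_iff_one_le_mul₀ hR] at hRx; linarith
  have hlow : x + x⁻¹ - 2 = (x - 1) ^ 2 / x := by field_simp; ring
  have hupp : R + R⁻¹ - (x + x⁻¹) = (R - x) * (x * R - 1) / (x * R) := by field_simp; ring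
  constructor
  · rw [← sub_nonneg, hlow]; positivity
  · rw [← sub_nonneg, hupp]
    exact div_nonneg (mul_nonneg (sub_nonneg.mpr hxR) (sub_nonneg.mpr hxR1)) (by positivity)

lemma inv_sq_lt_sq {R : ℝ} (hR : 1 < R) : R⁻¹ ^ 2 < R ^ 2 :=
  pow_lt_pow_left₀ ((inv_lt_one_of_one_lt₀ hR).trans hR) (by positivity) two_ne_zero

lemma add_inv_lt_sq_add_inv_sq {R : ℝ} (hR : 1 < R) : R + R⁻¹ < R ^ 2 + R⁻¹ ^ 2 := by
  have hR0 : 0 < R := zero_lt_one.trans hR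
  have h : R ^ 2 + R⁻¹ ^ 2 - (R + R⁻¹) = (R - 1) ^ 2 * (R ^ 2 + R + 1) / R ^ 2 := by
    field_simp; ring
  have : 0 < (R - 1) ^ 2 * (R ^ 2 + R + 1) / R ^ 2 :=
    div_pos (mul_pos (pow_pos (sub_pos.mpr hR) 2) (by positivity)) (by positivity)
  linarith

section CStarAlgebra

variable {𝒜 : Type*} [CStarAlgebra 𝒜]

lemma Ring.inverse_smul_mul_star {u : 𝒜} (hu : u ∈ unitary 𝒜) (g : 𝒜ˣ) {e : ℂ} (he : e ≠ 0) :
    Ring.inverse (e • ((g : 𝒜) * star u)) = e⁻¹ • (u * ↑g⁻¹) := by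
  refine Ring.inverse_unit ⟨_, e⁻¹ • (u * ↑g⁻¹), ?_, ?_⟩
  · rw [smul_mul_smul_comm, mul_inv_cancel₀ he, one_smul, mul_assoc, ← mul_assoc (star u),
      Unitary.star_mul_self_of_mem hu, one_mul, Units.mul_inv]
  · rw [smul_mul_smul_comm, inv_mul_cancel₀ he, one_smul, mul_assoc, ← mul_assoc (↑g⁻¹ : 𝒜),
      Units.inv_mul, one_mul, Unitary.mul_star_self_of_mem hu]

lemma Ring.inverse_mem_unitary_mul {u : 𝒜} (hu : u ∈ unitary 𝒜) (g : 𝒜ˣ) :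
    Ring.inverse (u * g) = ↑g⁻¹ * star u := by
  refine Ring.inverse_unit ⟨_, ↑g⁻¹ * star u, ?_, ?_⟩
  · rw [mul_assoc, ← mul_assoc (g : 𝒜), Units.mul_inv, one_mul, Unitary.mul_star_self_of_mem hu]
  · rw [mul_assoc, ← mul_assoc (star u), Unitary.star_mul_self_of_mem hu, one_mul, Units.inv_mul]

variable [PartialOrder 𝒜] [StarOrderedRing 𝒜]

lemma spectrum_subset_Icc_inv_of_norm_le {g : 𝒜ˣ} (hg : 0 ≤ (g : 𝒜)) {R : ℝ} (hR : 0 ≤ R)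
    (hgR : ‖(g : 𝒜)‖ ≤ R) (hginvR : ‖((g⁻¹ : 𝒜ˣ) : 𝒜)‖ ≤ R) :
    spectrum ℝ (g : 𝒜) ⊆ Set.Icc R⁻¹ R := by
  have hginv : 0 ≤ ((g⁻¹ : 𝒜ˣ) : 𝒜) := CFC.inv_nonneg_of_nonneg g hg
  have hle := (CStarAlgebra.norm_le_iff_le_algebraMap _ hR hg).mp hgR
  have hinv_le := (CStarAlgebra.norm_le_iff_le_algebraMap _ hR hginv).mp hginvR
  intro x hx
  have hx0 : 0 < x := lt_of_le_of_ne (spectrum_nonneg_of_nonneg hg hx)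
    (fun h => spectrum.zero_notMem ℝ g.isUnit (h ▸ hx))
  have hxinv : x⁻¹ ∈ spectrum ℝ ((g⁻¹ : 𝒜ˣ) : 𝒜) :=
    spectrum.inv_mem_iff (r := Units.mk0 x hx0.ne') |>.mp hx
  exact ⟨inv_le_of_inv_le₀ hx0
      ((le_algebraMap_iff_spectrum_le hginv.isSelfAdjoint).mp hinv_le _ hxinv),
    (le_algebraMap_iff_spectrum_le hg.isSelfAdjoint).mp hle x hx⟩

lemma spectrum_subset_Icc_inv_of_unitary_mul {u : 𝒜} (hu : u ∈ unitary 𝒜) {g : 𝒜ˣ}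
    (hg : 0 ≤ (g : 𝒜)) {R : ℝ} (hR : 0 ≤ R) (hA : ‖u * g‖ ≤ R)
    (hAinv : ‖Ring.inverse (u * g)‖ ≤ R) :
    spectrum ℝ (g : 𝒜) ⊆ Set.Icc R⁻¹ R := by
  refine spectrum_subset_Icc_inv_of_norm_le hg hR ?_ ?_
  · rwa [← CStarRing.norm_mem_unitary_mul _ hu]
  · calc ‖(↑g⁻¹ : 𝒜)‖ = ‖Ring.inverse (u * g) * u‖ := by
          rw [Ring.inverse_mem_unitary_mul hu, mul_assoc, Unitary.star_mul_self_of_mem hu, mul_one]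
      _ ≤ R := by rwa [CStarRing.norm_mul_mem_unitary _ hu]

lemma neg_algebraMap_le_add_star {x : 𝒜} {a : ℝ} (hx : ‖x‖ ≤ a) :
    -algebraMap ℝ 𝒜 (2 * a) ≤ x + star x := by
  have hnorm : ‖x + star x‖ ≤ 2 * a := by
    calc ‖x + star x‖ ≤ ‖x‖ + ‖star x‖ := norm_add_le _ _
      _ ≤ 2 * a := by rw [norm_star]; linarith
  exact (neg_le_neg (algebraMap_mono 𝒜 hnorm)).trans
    (IsSelfAdjoint.add_star_self x).neg_algebraMap_norm_le_self

lemma norm_algebraMap_sub_add_inv_le {g : 𝒜ˣ} (hg : 0 ≤ (g : 𝒜)) {R : ℝ} (hR : 0 < R)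
    (hspec : spectrum ℝ (g : 𝒜) ⊆ Set.Icc R⁻¹ R) :
    ‖algebraMap ℝ 𝒜 ((R + R⁻¹ + 2) / 2) - ((g : 𝒜) + ↑g⁻¹)‖ ≤ (R + R⁻¹ - 2) / 2 := by
  have hg0 : ∀ x ∈ spectrum ℝ (g : 𝒜), x ≠ 0 := fun x hx =>
    ((inv_pos.mpr hR).trans_le (hspec hx).1).ne'
  have hcfc : cfc (fun t : ℝ => (R + R⁻¹ + 2) / 2 - (t + t⁻¹)) (g : 𝒜)
      = algebraMap ℝ 𝒜 ((R + R⁻¹ + 2) / 2) - ((g : 𝒜) + ↑g⁻¹) := by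
    have hinv : ContinuousOn (fun t : ℝ => t⁻¹) (spectrum ℝ (g : 𝒜)) :=
      continuousOn_id.inv₀ hg0
    rw [cfc_sub (fun _ => (R + R⁻¹ + 2) / 2) (fun t => t + t⁻¹) _ continuousOn_const
        (continuousOn_id.add hinv), cfc_const _ _ hg.isSelfAdjoint,
      cfc_add _ (fun t => t) _ continuousOn_id hinv, cfc_id' ℝ (g : 𝒜),
      cfc_inv_id g hg.isSelfAdjoint]
  have hRR : 0 ≤ R + R⁻¹ - 2 := by
    have : R + R⁻¹ - 2 = (R - 1) ^ 2 / R := by field_simp; ring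
    rw [this]; positivity
  rw [← hcfc]
  refine norm_cfc_le (by linarith) fun x hx => ?_
  obtain ⟨h2, hRx⟩ := add_inv_mem_Icc hR (hspec hx)
  rw [Real.norm_eq_abs, abs_le]
  constructor <;> linarith

end CStarAlgebra

section Operators

variable {H : Type*} [NormedAddCommGroup H] [InnerProductSpace ℂ H] [CompleteSpace H]
  {U : H →L[ℂ] H} (R r θ : ℝ)

lemma Mop_unitary_mul (hU : U ∈ unitary (H →L[ℂ] H)) {g : (H →L[ℂ] H)ˣ}
    (hg : IsSelfAdjoint (g : H →L[ℂ] H)) :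
    Mop R r θ (U * (g : H →L[ℂ] H)) = (((2 * Real.pi) / (R ^ 2 - r ^ 2) : ℝ) : ℂ) •
      (((R ^ 2 + r ^ 2 : ℝ) : ℂ) • (1 : H →L[ℂ] H) - exp (-θ * I) • (U * (↑g⁻¹ : H →L[ℂ] H)) -
        exp (θ * I) • ((g : H →L[ℂ] H) * star U)) := by
  rw [Mop, ← star_eq_adjoint, star_mul, hg.star_eq,
    Ring.inverse_smul_mul_star hU g (exp_ne_zero _), neg_mul, exp_neg]

lemma re_Mop_unitary_mul_sub_Nop_eq (hU : U ∈ unitary (H →L[ℂ] H)) {g : (H →L[ℂ] H)ˣ}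
    (hg : IsSelfAdjoint (g : H →L[ℂ] H)) :
    let W := exp (θ * I) • ((algebraMap ℝ _ ((R + r + 2) / 2) - ((g : H →L[ℂ] H) + ↑g⁻¹)) * star U)
    (2 : ℂ)⁻¹ • (Mop R r θ (U * (g : H →L[ℂ] H)) + adjoint (Mop R r θ (U * (g : H →L[ℂ] H)))) -
        Nop R r θ U =
      (Real.pi / (R ^ 2 - r ^ 2)) • (W + star W + algebraMap ℝ _ (R + r - 2)) := by
  intro W
  have hginv : star (↑g⁻¹ : H →L[ℂ] H) = ↑g⁻¹ := by
    rw [← Units.coe_star_inv, show star g = g from Units.ext hg.star_eq]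
  rw [← star_eq_adjoint, Mop_unitary_mul R r θ hU hg, Nop, ← star_eq_adjoint]
  simp only [W, Algebra.algebraMap_eq_smul_one, sub_mul, add_mul, smul_mul_assoc, one_mul,
    star_smul, star_sub, star_add, star_mul, star_one, star_star, star_trivial, hg.star_eq, hginv,
    Complex.star_def, ← exp_conj, map_mul, map_neg, conj_ofReal, conj_I, mul_neg, neg_mul, neg_neg]
  match_scalars <;> simp only [Complex.coe_algebraMap] <;> ring

lemma algebraMap_le_Nop (hU : U ∈ unitary (H →L[ℂ] H)) (hc : 0 ≤ 2 * Real.pi / (R ^ 2 - r ^ 2))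
    (hRr : 0 ≤ R + r + 2) :
    algebraMap ℝ _ (2 * Real.pi / (R ^ 2 - r ^ 2) * (R ^ 2 + r ^ 2 - R - r)) ≤ Nop R r θ U := by
  set V := (1 : H →L[ℂ] H) - exp (-θ * I) • U
  have hef : exp (θ * I) * exp (-θ * I) = 1 := by rw [← exp_add, neg_mul, add_neg_cancel, exp_zero]
  have hV : star V * V = (2 : ℂ) • 1 - exp (θ * I) • adjoint U - exp (-θ * I) • U := by
    have hVstar : star V = 1 - exp (θ * I) • star U := by
      simp only [V, star_sub, star_one, star_smul, Complex.star_def, ← exp_conj, map_mul, map_neg,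
        conj_ofReal, conj_I, neg_mul, mul_neg, neg_neg]
    rw [hVstar, ← star_eq_adjoint]
    simp only [V, sub_mul, mul_sub, one_mul, mul_one, smul_mul_smul_comm, hef, one_smul,
      Unitary.star_mul_self_of_mem hU]
    module
  have hN : Nop R r θ U = (2 * Real.pi / (R ^ 2 - r ^ 2) * (R ^ 2 + r ^ 2 - R - r)) • 1 +
      (2 * Real.pi / (R ^ 2 - r ^ 2) * ((R + r + 2) / 4)) • (star V * V) := by
    rw [hV, Nop]
    match_scalars <;> simp only [Complex.coe_algebraMap] <;> ring
  rw [hN, Algebra.algebraMap_eq_smul_one]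
  exact le_add_of_nonneg_right (smul_nonneg (by positivity) (star_mul_self_nonneg V))

lemma re_Mop_unitary_mul_sub_Nop_nonneg (hU : U ∈ unitary (H →L[ℂ] H)) {g : (H →L[ℂ] H)ˣ}
    (hg : 0 ≤ (g : H →L[ℂ] H)) (hR : 1 < R) (hspec : spectrum ℝ (g : H →L[ℂ] H) ⊆ Set.Icc R⁻¹ R) :
    0 ≤ (2 : ℂ)⁻¹ • (Mop R R⁻¹ θ (U * (g : H →L[ℂ] H)) +
      adjoint (Mop R R⁻¹ θ (U * (g : H →L[ℂ] H)))) - Nop R R⁻¹ θ U := by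
  have hD := norm_algebraMap_sub_add_inv_le hg (zero_lt_one.trans hR) hspec
  rw [re_Mop_unitary_mul_sub_Nop_eq R R⁻¹ θ hU hg.isSelfAdjoint]
  refine smul_nonneg (div_nonneg Real.pi_pos.le (sub_pos.mpr (inv_sq_lt_sq hR)).le) ?_
  have hW := neg_algebraMap_le_add_star (x := exp (θ * I) • ((algebraMap ℝ (H →L[ℂ] H)
    ((R + R⁻¹ + 2) / 2) - ((g : H →L[ℂ] H) + ↑g⁻¹)) * star U)) (a := (R + R⁻¹ - 2) / 2) (by
      rwa [norm_smul, norm_exp_ofReal_mul_I, one_mul,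
        CStarRing.norm_mul_mem_unitary _ (Unitary.star_mem hU)])
  rwa [mul_div_cancel₀ _ two_ne_zero, neg_le_iff_add_nonneg] at hW

end Operators

theorem stmt_5_general {H : Type*} [NormedAddCommGroup H] [InnerProductSpace ℂ H] [CompleteSpace H]
    (R : ℝ) (hR : 1 < R) (r : ℝ) (hr : r = 1 / R)
    (A U G : H →L[ℂ] H)
    (hAnorm : ‖A‖ < R) (hAinv : ‖Ring.inverse A‖ < R)
    (hU : U ∈ unitary (H →L[ℂ] H)) (hG : G.IsPositive) (hGunit : IsUnit G)
    (hpolar : A = U * G) (θ : ℝ) :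
    (((2 : ℂ)⁻¹ • (Mop R r θ A + ContinuousLinearMap.adjoint (Mop R r θ A)) -
        Nop R r θ U).IsPositive) ∧
      (Nop R r θ U).IsPositive ∧ IsUnit (Nop R r θ U) := by
  obtain ⟨g, rfl⟩ := hGunit
  subst hpolar
  rw [one_div] at hr
  subst hr
  have hg : 0 ≤ (g : H →L[ℂ] H) := (nonneg_iff_isPositive _).mpr hG
  have hspec := spectrum_subset_Icc_inv_of_unitary_mul hU hg (zero_lt_one.trans hR).le
    hAnorm.le hAinv.le
  have hc : 0 < 2 * Real.pi / (R ^ 2 - R⁻¹ ^ 2) :=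
    div_pos Real.two_pi_pos (sub_pos.mpr (inv_sq_lt_sq hR))
  have hb : 0 < 2 * Real.pi / (R ^ 2 - R⁻¹ ^ 2) * (R ^ 2 + R⁻¹ ^ 2 - R - R⁻¹) :=
    mul_pos hc (by linarith [add_inv_lt_sq_add_inv_sq hR])
  have hN := algebraMap_le_Nop R R⁻¹ θ hU hc.le (by positivity)
  exact ⟨(nonneg_iff_isPositive _).mp (re_Mop_unitary_mul_sub_Nop_nonneg R θ hU hg hR hspec),
    (nonneg_iff_isPositive _).mp ((algebraMap_nonneg _ hb.le).trans hN),
    CStarAlgebra.isUnit_of_le _ hN (isStrictlyPositive_algebraMap hb)⟩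

theorem stmt_5 {H : Type*} [NormedAddCommGroup H] [InnerProductSpace ℂ H] [CompleteSpace H]
    (R : ℝ) (hR : 1 < R) (r : ℝ) (hr : r = 1 / R)
    (A U G : H →L[ℂ] H) (hAunit : IsUnit A)
    (hAnorm : ‖A‖ < R) (hAinv : ‖Ring.inverse A‖ < R)
    (hU : U ∈ unitary (H →L[ℂ] H)) (hG : G.IsPositive) (hGunit : IsUnit G)
    (hpolar : A = U * G) (θ : ℝ) :
    (((2 : ℂ)⁻¹ • (Mop R r θ A + ContinuousLinearMap.adjoint (Mop R r θ A)) -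
        Nop R r θ U).IsPositive) ∧
      (Nop R r θ U).IsPositive ∧ IsUnit (Nop R r θ U) :=
  stmt_5_general R hR r hr A U G hAnorm hAinv hU hG hGunit hpolar θ
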